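/- arXiv:1102.0059 — 4 statements merged into one kernel-verified Lean document; each statement's English description precedes it below -/
import Mathlib

section
/- (Anderson's lemma on the Bayes error rate.) Let Σ be a p×p positive definite real matrix, let μ₁, μ₂ ∈ ℝᵖ, set u = μ₁ − μ₂ and S = uᵀΣ⁻¹u. In the balanced Gaussian mixture model with classes N(μ₁, Σ) and N(μ₂, Σ), every measurable classifier g : ℝᵖ → {0, 1} satisfies (1/2)·P_{X~N(μ₁,Σ)}(g(X) ≠ 1) + (1/2)·P_{X~N(μ₂,Σ)}(g(X) ≠ 0) ≥ Φ(−√S / 2); consequently the Bayes error rate under 0–1 loss equals Φ(−√S / 2). -/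
/-!
Whitening by the symmetric square root `A = √Cov` turns the classes `N(μ₂, Cov)` and
`N(μ₁, Cov)` into `N(0, I)` and `N(v, I)` with `v = A⁻¹ (μ₁ - μ₂)`, and `S = ‖v‖²`. By the
Cameron–Martin formula the likelihood ratio of `N(v, I)` to `N(0, I)` is
`exp (⟪v, z⟫ - ‖v‖² / 2)`, so by the Neyman–Pearson lemma the half-space `‖v‖² / 2 ≤ ⟪v, z⟫`
is an optimal acceptance region for class `1`. Under both classes `⟪v, z⟫` is a real Gaussian
of variance `‖v‖²`, and the two error probabilities of that test add up to `2 Φ(-‖v‖ / 2)`.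
-/

open MeasureTheory ProbabilityTheory Matrix
open scoped ENNReal NNReal

/-- The standard Gaussian measure on `Fin p → ℝ`: product of `p` iid standard normals. -/
noncomputable def stdGaussianPi (p : ℕ) : Measure (Fin p → ℝ) :=
  Measure.pi fun _ => gaussianReal 0 1

/-- The multivariate Gaussian measure `N(μ, Cov)` on `ℝᵖ`. -/
noncomputable def multivariateGaussian {p : ℕ} (μ : Fin p → ℝ)
    (Cov : Matrix (Fin p) (Fin p) ℝ) (hCov : Cov.PosSemidef) : Measure (Fin p → ℝ) :=
  Measure.map (fun z => μ + ((hCov.1.eigenvectorUnitary : Matrix (Fin p) (Fin p) ℝ) *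
    diagonal ((RCLike.ofReal : ℝ → ℝ) ∘ (Real.sqrt ∘ hCov.1.eigenvalues)) *
    (star hCov.1.eigenvectorUnitary : Matrix (Fin p) (Fin p) ℝ)).mulVec z) (stdGaussianPi p)

/-- The standard normal cumulative distribution function `Φ`. -/
noncomputable def stdNormalCDF (x : ℝ) : ℝ :=
  ((gaussianReal 0 1) (Set.Iic x)).toReal

/-- The error rate of a classifier `g : ℝᵖ → {0,1}` (here `Bool`) in the balanced Gaussian
mixture with classes `N(μ₁, Cov)` (label `1` = `true`) and `N(μ₂, Cov)` (label `0` = `false`):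
`(1/2)·P_{X~N(μ₁,Cov)}(g(X) ≠ 1) + (1/2)·P_{X~N(μ₂,Cov)}(g(X) ≠ 0)`. -/
noncomputable def mixtureErrorRate {p : ℕ} (μ₁ μ₂ : Fin p → ℝ)
    (Cov : Matrix (Fin p) (Fin p) ℝ) (hCov : Cov.PosSemidef)
    (g : (Fin p → ℝ) → Bool) : ℝ :=
  (1 / 2) * ((multivariateGaussian μ₁ Cov hCov) {x | g x ≠ true}).toReal
    + (1 / 2) * ((multivariateGaussian μ₂ Cov hCov) {x | g x ≠ false}).toReal

open Real Set
open scoped MatrixOrder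

namespace MeasureTheory.Measure

variable {α : Type*} [MeasurableSpace α] {μ : Measure α} {ρ : α → ℝ≥0∞} {s : Set α}

lemma le_withDensity_apply_of_one_le (hs : MeasurableSet s) (h : ∀ x ∈ s, 1 ≤ ρ x) :
    μ s ≤ μ.withDensity ρ s := by
  rw [withDensity_apply _ hs, ← setLIntegral_one]
  exact setLIntegral_mono' hs h

lemma withDensity_apply_le_of_le_one (hs : MeasurableSet s) (h : ∀ x ∈ s, ρ x ≤ 1) :
    μ.withDensity ρ s ≤ μ s := by
  rw [withDensity_apply _ hs, ← setLIntegral_one]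
  exact setLIntegral_mono' hs h

/-- **Neyman–Pearson lemma**, for the sum of the two error probabilities. -/
theorem add_withDensity_compl_le {H B : Set α} (hH : MeasurableSet H) (hB : MeasurableSet B)
    (h_one_le : ∀ x ∈ H, 1 ≤ ρ x) (h_le_one : ∀ x ∉ H, ρ x ≤ 1) :
    μ H + μ.withDensity ρ Hᶜ ≤ μ B + μ.withDensity ρ Bᶜ := by
  set ν := μ.withDensity ρ
  have hHB : μ (H \ B) ≤ ν (H \ B) :=
    le_withDensity_apply_of_one_le (hH.diff hB) fun x hx => h_one_le x hx.1
  have hBH : ν (B \ H) ≤ μ (B \ H) :=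
    withDensity_apply_le_of_le_one (hB.diff hH) fun x hx => h_le_one x hx.2
  have e₁ : Hᶜ ∩ B = B \ H := Set.ext fun x => by simp [and_comm]
  have e₂ : Hᶜ \ B = Bᶜ \ H := Set.ext fun x => by simp [and_comm]
  have e₃ : H \ B = Bᶜ ∩ H := Set.ext fun x => by simp [and_comm]
  calc μ H + ν Hᶜ = μ (B ∩ H) + μ (H \ B) + (ν (B \ H) + ν (Bᶜ \ H)) := by
        rw [← measure_inter_add_sdiff H hB, ← measure_inter_add_sdiff Hᶜ hB, e₁, e₂,
          Set.inter_comm]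
    _ ≤ μ (B ∩ H) + ν (H \ B) + (μ (B \ H) + ν (Bᶜ \ H)) := by gcongr
    _ = μ B + ν Bᶜ := by
        rw [add_add_add_comm, measure_inter_add_sdiff B hH, e₃, measure_inter_add_sdiff Bᶜ hH]

theorem pi_withDensity {ι : Type*} [Fintype ι] {α : ι → Type*} [∀ i, MeasurableSpace (α i)]
    (μ : ∀ i, Measure (α i)) [∀ i, IsProbabilityMeasure (μ i)] {ρ : ∀ i, α i → ℝ≥0∞}
    (hρ : ∀ i, Measurable (ρ i)) [∀ i, SigmaFinite ((μ i).withDensity (ρ i))] :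
    Measure.pi (fun i => (μ i).withDensity (ρ i))
      = (Measure.pi μ).withDensity fun x => ∏ i, ρ i (x i) := by
  refine Measure.pi_eq (μ := fun i => (μ i).withDensity (ρ i)) fun s hs => ?_
  have hind : (univ.pi s).indicator (fun x => ∏ i, ρ i (x i))
      = fun x => ∏ i, (s i).indicator (ρ i) (x i) := by
    funext x
    classical
    simp only [Set.indicator, mem_univ_pi, Finset.prod_ite_zero, Finset.mem_univ, true_implies]
  have hρs : ∀ i, Measurable ((s i).indicator (ρ i)) := fun i => (hρ i).indicator (hs i)
  rw [withDensity_apply _ (.univ_pi hs), ← lintegral_indicator (.univ_pi hs), hind,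
    lintegral_prod_eq_prod_lintegral_of_indepFun _ _
      (iIndepFun_pi fun i => (hρs i).aemeasurable) fun i => (hρs i).comp (measurable_pi_apply i)]
  refine Finset.prod_congr rfl fun i _ => ?_
  rw [(measurePreserving_eval μ i).lintegral_comp (hρs i), lintegral_indicator (hs i),
    withDensity_apply _ (hs i)]

end MeasureTheory.Measure

lemma gaussianReal_withDensity_exp (a : ℝ) :
    (gaussianReal 0 1).withDensity (fun x => ENNReal.ofReal (exp (a * x - a ^ 2 / 2)))
      = gaussianReal a 1 := by
  rw [gaussianReal_of_var_ne_zero 0 one_ne_zero, gaussianReal_of_var_ne_zero a one_ne_zero,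
    ← withDensity_mul _ (measurable_gaussianPDF 0 1) (by fun_prop)]
  congr 1
  funext x
  rw [Pi.mul_apply, gaussianPDF, gaussianPDF, ← ENNReal.ofReal_mul (gaussianPDFReal_nonneg _ _ _)]
  simp only [gaussianPDFReal, NNReal.coe_one, mul_one, sub_zero, mul_assoc, ← exp_add]
  ring_nf

lemma gaussianReal_Ici_eq_Iic_neg (v : ℝ≥0) (t : ℝ) :
    gaussianReal 0 v (Ici t) = gaussianReal 0 v (Iic (-t)) := by
  conv_lhs => rw [← neg_zero, ← gaussianReal_map_neg]
  rw [Measure.map_apply measurable_neg measurableSet_Ici]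
  exact congrArg _ (neg_Ici t)

lemma stdNormalCDF_zero : stdNormalCDF 0 = 1 / 2 := by
  have := nullSingletonClass_gaussianReal (μ := 0) one_ne_zero
  have hsymm : gaussianReal 0 1 (Ici 0) = gaussianReal 0 1 (Iic 0) := by
    simpa using gaussianReal_Ici_eq_Iic_neg 1 0
  have h : gaussianReal 0 1 (Iic 0) + gaussianReal 0 1 (Iic 0) = 1 := by
    nth_rw 2 [← hsymm]
    rw [← measure_congr Ioi_ae_eq_Ici, ← measure_union (Iic_disjoint_Ioi le_rfl) measurableSet_Ioi,
      Iic_union_Ioi, measure_univ]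
  have h' := congrArg ENNReal.toReal h
  rw [ENNReal.toReal_add (measure_ne_top _ _) (measure_ne_top _ _), ENNReal.toReal_one] at h'
  rw [stdNormalCDF]
  linarith

lemma gaussianReal_Ici_half_add_Iio_neg_half {S : ℝ} (hS : 0 ≤ S) :
    (gaussianReal 0 S.toNNReal (Ici (S / 2))).toReal
      + (gaussianReal 0 S.toNNReal (Iio (-S / 2))).toReal = 2 * stdNormalCDF (-√S / 2) := by
  rcases hS.eq_or_lt with rfl | hS
  · simp [gaussianReal_zero_var, stdNormalCDF_zero]
  have hc : 0 < √S := sqrt_pos.mpr hS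
  have := nullSingletonClass_gaussianReal (μ := 0) one_ne_zero
  have hmap : gaussianReal 0 S.toNNReal = (gaussianReal 0 1).map (√S * ·) := by
    rw [gaussianReal_map_const_mul, mul_zero]
    congr
    ext
    simp [sq_sqrt hS.le, hS.le]
  have hIci : (√S * ·) ⁻¹' Ici (S / 2) = Ici (√S / 2) := by
    rw [preimage_const_mul_Ici₀ _ hc]
    congr 1
    field_simp
    rw [sq_sqrt hS.le]
  have hIio : (√S * ·) ⁻¹' Iio (-S / 2) = Iio (-√S / 2) := by
    rw [preimage_const_mul_Iio₀ _ hc]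
    congr 1
    field_simp
    rw [sq_sqrt hS.le]
  rw [hmap, Measure.map_apply (by fun_prop) measurableSet_Ici,
    Measure.map_apply (by fun_prop) measurableSet_Iio, hIci, hIio, measure_congr Iio_ae_eq_Iic,
    gaussianReal_Ici_eq_Iic_neg, stdNormalCDF, neg_div]
  ring

section StdGaussianPi

variable {n : ℕ}

instance : IsProbabilityMeasure (stdGaussianPi n) := by
  unfold stdGaussianPi
  infer_instance

/-- The Cameron–Martin formula in finite dimension. -/
lemma stdGaussianPi_map_add_const (v : Fin n → ℝ) :
    (stdGaussianPi n).map (· + v)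
      = (stdGaussianPi n).withDensity fun x => ENNReal.ofReal (exp (v ⬝ᵥ x - v ⬝ᵥ v / 2)) := by
  calc (stdGaussianPi n).map (· + v)
      = Measure.pi fun i => (gaussianReal 0 1).map (· + v i) :=
        Measure.pi_map_pi (f := fun i x => x + v i) fun i => by fun_prop
    _ = Measure.pi fun i =>
          (gaussianReal 0 1).withDensity fun x => ENNReal.ofReal (exp (v i * x - v i ^ 2 / 2)) := by
        simp_rw [gaussianReal_map_add_const, zero_add, gaussianReal_withDensity_exp]
    _ = _ := by
        rw [Measure.pi_withDensity _ fun i => by fun_prop]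
        congr 1
        funext x
        rw [← ENNReal.ofReal_prod_of_nonneg fun i _ => (exp_pos _).le, ← exp_sum,
          Finset.sum_sub_distrib, ← Finset.sum_div]
        simp [dotProduct, sq]

lemma stdGaussianPi_eq_map_ofLp (n : ℕ) :
    stdGaussianPi n = (stdGaussian (EuclideanSpace ℝ (Fin n))).map WithLp.ofLp := by
  rw [← map_pi_eq_stdGaussian, Measure.map_map (by fun_prop) (by fun_prop)]
  exact Measure.map_id.symm

lemma stdGaussianPi_map_dotProduct (v : Fin n → ℝ) :
    (stdGaussianPi n).map (v ⬝ᵥ ·) = gaussianReal 0 (v ⬝ᵥ v).toNNReal := by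
  have h : (v ⬝ᵥ ·) ∘ WithLp.ofLp = innerSL ℝ (WithLp.toLp 2 v) := by
    ext x
    simp [EuclideanSpace.inner_eq_star_dotProduct, dotProduct_comm]
  rw [stdGaussianPi_eq_map_ofLp, Measure.map_map (by fun_prop) (by fun_prop), h,
    IsGaussian.map_eq_gaussianReal, integral_strongDual_stdGaussian, variance_dual_stdGaussian,
    innerSL_apply_norm, EuclideanSpace.real_norm_sq_eq]
  simp [dotProduct, sq]

/-- The region where the density of `N(v, I)` with respect to `N(0, I)` is at least `1`. -/
def likelihoodRatioHalfSpace (v : Fin n → ℝ) : Set (Fin n → ℝ) :=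
  {z | v ⬝ᵥ v / 2 ≤ v ⬝ᵥ z}

lemma measurableSet_likelihoodRatioHalfSpace (v : Fin n → ℝ) :
    MeasurableSet (likelihoodRatioHalfSpace v) :=
  measurableSet_le measurable_const (by fun_prop)

lemma stdGaussianPi_likelihoodRatioHalfSpace_add_le (v : Fin n → ℝ) {B : Set (Fin n → ℝ)}
    (hB : MeasurableSet B) :
    (stdGaussianPi n (likelihoodRatioHalfSpace v)).toReal
        + ((stdGaussianPi n).map (· + v) (likelihoodRatioHalfSpace v)ᶜ).toReal
      ≤ (stdGaussianPi n B).toReal + ((stdGaussianPi n).map (· + v) Bᶜ).toReal := by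
  have : IsProbabilityMeasure ((stdGaussianPi n).map (· + v)) :=
    Measure.isProbabilityMeasure_map (by fun_prop)
  rw [← ENNReal.toReal_add (measure_ne_top _ _) (measure_ne_top _ _),
    ← ENNReal.toReal_add (measure_ne_top _ _) (measure_ne_top _ _)]
  refine ENNReal.toReal_mono (by finiteness) ?_
  rw [stdGaussianPi_map_add_const]
  refine Measure.add_withDensity_compl_le (measurableSet_likelihoodRatioHalfSpace v) hB
    (fun x hx => ?_) fun x hx => ?_
  · rw [ENNReal.one_le_ofReal, one_le_exp_iff]
    linarith [show v ⬝ᵥ v / 2 ≤ v ⬝ᵥ x from hx]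
  · rw [ENNReal.ofReal_le_one, exp_le_one_iff]
    linarith [not_le.mp (show ¬v ⬝ᵥ v / 2 ≤ v ⬝ᵥ x from hx)]

lemma stdGaussianPi_likelihoodRatioHalfSpace_add (v : Fin n → ℝ) :
    (stdGaussianPi n (likelihoodRatioHalfSpace v)).toReal
        + ((stdGaussianPi n).map (· + v) (likelihoodRatioHalfSpace v)ᶜ).toReal
      = 2 * stdNormalCDF (-√(v ⬝ᵥ v) / 2) := by
  have hproj : Measurable (v ⬝ᵥ · : (Fin n → ℝ) → ℝ) := by fun_prop
  have hH : stdGaussianPi n (likelihoodRatioHalfSpace v)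
      = gaussianReal 0 (v ⬝ᵥ v).toNNReal (Ici (v ⬝ᵥ v / 2)) := by
    rw [← stdGaussianPi_map_dotProduct, Measure.map_apply hproj measurableSet_Ici]
    rfl
  have hHc : (stdGaussianPi n).map (· + v) (likelihoodRatioHalfSpace v)ᶜ
      = gaussianReal 0 (v ⬝ᵥ v).toNNReal (Iio (-(v ⬝ᵥ v) / 2)) := by
    rw [← stdGaussianPi_map_dotProduct, Measure.map_apply hproj measurableSet_Iio,
      Measure.map_apply (by fun_prop) (measurableSet_likelihoodRatioHalfSpace v).compl]
    congr 1
    ext z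
    simp only [likelihoodRatioHalfSpace, mem_preimage, mem_compl_iff, mem_ofPred_eq, mem_Iio,
      dotProduct_add, not_le]
    constructor <;> intro h <;> linarith
  rw [hH, hHc,
    gaussianReal_Ici_half_add_Iio_neg_half (by simpa using dotProduct_self_star_nonneg v)]

end StdGaussianPi

namespace Matrix

variable {n : Type*} [Fintype n] [DecidableEq n]

lemma cfc_sqrt_mul_transpose {Cov : Matrix n n ℝ} (hCov : Cov.PosSemidef) :
    cfc Real.sqrt Cov * (cfc Real.sqrt Cov)ᵀ = Cov := by
  have h0 : 0 ≤ Cov := hCov.nonneg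
  have hsqrt : cfc Real.sqrt Cov = CFC.sqrt Cov := by
    rw [CFC.sqrt_eq_real_sqrt Cov h0, cfcₙ_eq_cfc]
  have hT : (cfc Real.sqrt Cov)ᵀ = cfc Real.sqrt Cov := by
    rw [← conjTranspose_eq_transpose_of_trivial]
    exact cfc_predicate (p := IsSelfAdjoint) Real.sqrt Cov
  rw [hT, hsqrt, CFC.sqrt_mul_sqrt_self Cov h0]

lemma isUnit_det_cfc_sqrt {Cov : Matrix n n ℝ} (hCov : Cov.PosDef) :
    IsUnit (cfc Real.sqrt Cov).det := by
  have h := congrArg det (cfc_sqrt_mul_transpose hCov.posSemidef)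
  rw [det_mul, det_transpose] at h
  refine isUnit_iff_ne_zero.mpr fun h0 => hCov.det_pos.ne' ?_
  rw [← h, h0, mul_zero]

lemma inv_mulVec_dotProduct_self {R : Type*} [CommRing R] (A : Matrix n n R) (u : n → R) :
    (A⁻¹ *ᵥ u) ⬝ᵥ (A⁻¹ *ᵥ u) = u ⬝ᵥ (A * Aᵀ)⁻¹ *ᵥ u := by
  rw [mul_inv_rev, ← transpose_nonsing_inv, ← mulVec_mulVec, dotProduct_mulVec u, vecMul_transpose]

end Matrix

section Mixture

variable {p : ℕ} {μ₁ μ₂ : Fin p → ℝ} {Cov : Matrix (Fin p) (Fin p) ℝ}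

lemma multivariateGaussian_eq_map (μ : Fin p → ℝ) (hCov : Cov.PosSemidef) :
    multivariateGaussian μ Cov hCov
      = (stdGaussianPi p).map fun z => μ + cfc Real.sqrt Cov *ᵥ z := by
  rw [hCov.1.cfc_eq]
  rfl

/-- In the coordinates `x = μ₂ + √Cov z`, the class `N(μ₂, Cov)` becomes `N(0, I)` and the class
`N(μ₁, Cov)` becomes `N(v, I)`. -/
lemma mixtureErrorRate_eq_stdGaussianPi (hCov : Cov.PosSemidef) {v : Fin p → ℝ}
    (hv : cfc Real.sqrt Cov *ᵥ v = μ₁ - μ₂) {g : (Fin p → ℝ) → Bool} (hg : Measurable g) :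
    mixtureErrorRate μ₁ μ₂ Cov hCov g
      = ((stdGaussianPi p) {z | g (μ₂ + cfc Real.sqrt Cov *ᵥ z) = true}).toReal / 2
        + ((stdGaussianPi p).map (· + v) {z | g (μ₂ + cfc Real.sqrt Cov *ᵥ z) = true}ᶜ).toReal
          / 2 := by
  rw [mixtureErrorRate, multivariateGaussian_eq_map, multivariateGaussian_eq_map]
  set A := cfc Real.sqrt Cov
  have hT : ∀ μ : Fin p → ℝ, Measurable fun z => μ + A *ᵥ z := fun μ => by fun_prop
  have hB : MeasurableSet {z | g (μ₂ + A *ᵥ z) = true} :=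
    hg.comp (hT μ₂) (measurableSet_singleton true)
  have hshift : ∀ z, μ₂ + A *ᵥ (z + v) = μ₁ + A *ᵥ z := fun z => by
    rw [mulVec_add, hv]
    abel
  have hne : ∀ b, MeasurableSet {x | g x ≠ b} := fun b => (hg (measurableSet_singleton b)).compl
  rw [Measure.map_apply (hT μ₁) (hne true), Measure.map_apply (hT μ₂) (hne false),
    Measure.map_apply (by fun_prop) hB.compl]
  have h₁ : (fun z => μ₁ + A *ᵥ z) ⁻¹' {x | g x ≠ true}
      = (· + v) ⁻¹' {z | g (μ₂ + A *ᵥ z) = true}ᶜ := by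
    ext z
    simp [hshift]
  have h₂ : (fun z => μ₂ + A *ᵥ z) ⁻¹' {x | g x ≠ false} = {z | g (μ₂ + A *ᵥ z) = true} := by
    ext z
    simp
  rw [h₁, h₂]
  ring

theorem isLeast_mixtureErrorRate (hCov : Cov.PosDef) :
    IsLeast {e | ∃ g : (Fin p → ℝ) → Bool, Measurable g
        ∧ e = mixtureErrorRate μ₁ μ₂ Cov hCov.posSemidef g}
      (stdNormalCDF (-√((μ₁ - μ₂) ⬝ᵥ Cov⁻¹ *ᵥ (μ₁ - μ₂)) / 2)) := by
  classical
  have hA := isUnit_det_cfc_sqrt hCov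
  set v := (cfc Real.sqrt Cov)⁻¹ *ᵥ (μ₁ - μ₂)
  have hv : cfc Real.sqrt Cov *ᵥ v = μ₁ - μ₂ := by simp [v, mulVec_mulVec, mul_nonsing_inv _ hA]
  have hS : (μ₁ - μ₂) ⬝ᵥ Cov⁻¹ *ᵥ (μ₁ - μ₂) = v ⬝ᵥ v := by
    rw [inv_mulVec_dotProduct_self, cfc_sqrt_mul_transpose hCov.posSemidef]
  rw [hS]
  let gopt : (Fin p → ℝ) → Bool :=
    fun x => decide ((cfc Real.sqrt Cov)⁻¹ *ᵥ (x - μ₂) ∈ likelihoodRatioHalfSpace v)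
  have hgopt : Measurable gopt := by
    have hW : Measurable fun x => (cfc Real.sqrt Cov)⁻¹ *ᵥ (x - μ₂) := by fun_prop
    refine measurable_to_bool ?_
    convert hW (measurableSet_likelihoodRatioHalfSpace v)
    ext x
    simp [gopt]
  have hBopt : {z | gopt (μ₂ + cfc Real.sqrt Cov *ᵥ z) = true} = likelihoodRatioHalfSpace v := by
    ext z
    simp [gopt, mulVec_mulVec, nonsing_inv_mul _ hA]
  refine ⟨⟨gopt, hgopt, ?_⟩, ?_⟩
  · rw [mixtureErrorRate_eq_stdGaussianPi hCov.posSemidef hv hgopt, hBopt]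
    linarith [stdGaussianPi_likelihoodRatioHalfSpace_add v]
  · rintro _ ⟨g, hg, rfl⟩
    have hB : MeasurableSet {z | g (μ₂ + cfc Real.sqrt Cov *ᵥ z) = true} :=
      hg.comp (by fun_prop) (measurableSet_singleton true)
    rw [mixtureErrorRate_eq_stdGaussianPi hCov.posSemidef hv hg]
    linarith [stdGaussianPi_likelihoodRatioHalfSpace_add v,
      stdGaussianPi_likelihoodRatioHalfSpace_add_le v hB]

end Mixture

theorem bayes_error_rate_gaussianMixture_general
    (p : ℕ) (μ₁ μ₂ : Fin p → ℝ)
    (Cov : Matrix (Fin p) (Fin p) ℝ) (hCov : Cov.PosDef) :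
    (∀ g : (Fin p → ℝ) → Bool, Measurable g →
        stdNormalCDF (- Real.sqrt ((μ₁ - μ₂) ⬝ᵥ Cov⁻¹.mulVec (μ₁ - μ₂)) / 2)
          ≤ mixtureErrorRate μ₁ μ₂ Cov hCov.posSemidef g)
      ∧ sInf {e : ℝ | ∃ g : (Fin p → ℝ) → Bool, Measurable g
            ∧ e = mixtureErrorRate μ₁ μ₂ Cov hCov.posSemidef g}
          = stdNormalCDF (- Real.sqrt ((μ₁ - μ₂) ⬝ᵥ Cov⁻¹.mulVec (μ₁ - μ₂)) / 2) :=
  ⟨fun g hg => (isLeast_mixtureErrorRate hCov).2 ⟨g, hg, rfl⟩,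
    (isLeast_mixtureErrorRate hCov).csInf_eq⟩

/-- Anderson's lemma on the Bayes error rate: every measurable classifier has
error rate at least `Φ(-√S / 2)` where `S = uᵀ Cov⁻¹ u`, `u = μ₁ - μ₂`; consequently the Bayes
error rate under 0-1 loss equals `Φ(-√S / 2)`. -/
theorem bayes_error_rate_gaussianMixture
    (p : ℕ) (hp : 1 ≤ p) (μ₁ μ₂ : Fin p → ℝ)
    (Cov : Matrix (Fin p) (Fin p) ℝ) (hCov : Cov.PosDef) :
    (∀ g : (Fin p → ℝ) → Bool, Measurable g →
        stdNormalCDF (- Real.sqrt ((μ₁ - μ₂) ⬝ᵥ Cov⁻¹.mulVec (μ₁ - μ₂)) / 2)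
          ≤ mixtureErrorRate μ₁ μ₂ Cov hCov.posSemidef g)
      ∧ sInf {e : ℝ | ∃ g : (Fin p → ℝ) → Bool, Measurable g
            ∧ e = mixtureErrorRate μ₁ μ₂ Cov hCov.posSemidef g}
          = stdNormalCDF (- Real.sqrt ((μ₁ - μ₂) ⬝ᵥ Cov⁻¹.mulVec (μ₁ - μ₂)) / 2) :=
  bayes_error_rate_gaussianMixture_general p μ₁ μ₂ Cov hCov
end

section
/- Let Σ be a positive definite real matrix indexed by a finite set F, let u ∈ ℝ^F, and let F₁ ⊆ F. Let A = Σ[F₁, F₁] be the principal submatrix of Σ on F₁ and u₁ = u restricted to F₁. Then the separation induced by the subset is no larger than the full separation: u₁ᵀA⁻¹u₁ ≤ uᵀΣ⁻¹u. -/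
open Matrix

/-!
`uᵀ M⁻¹ u` is the maximum over `w` of `2 wᵀu - wᵀ M w`, attained at `w = M⁻¹ u`. The separation of
`F₁` is this maximum over vectors supported on `F₁`, hence no larger than the unrestricted maximum.
-/

namespace Matrix

variable {m n R : Type*} [Fintype m] [Fintype n]

section CommRing

variable [CommRing R]

def quadGain (M : Matrix n n R) (u w : n → R) : R :=
  2 * (w ⬝ᵥ u) - w ⬝ᵥ M *ᵥ w

theorem quadGain_inv_mulVec [DecidableEq n] {M : Matrix n n R} (hM : IsUnit M.det) (u : n → R) :
    quadGain M u (M⁻¹ *ᵥ u) = u ⬝ᵥ M⁻¹ *ᵥ u := by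
  rw [quadGain, mulVec_mulVec, mul_nonsing_inv M hM, one_mulVec, dotProduct_comm]
  ring

theorem extend_zero_dotProduct {e : m → n} (he : Function.Injective e) (x : m → R) (v : n → R) :
    Function.extend e x 0 ⬝ᵥ v = x ⬝ᵥ (v ∘ e) :=
  (Fintype.sum_of_injective e he _ _ (fun i hi ↦ by simp [Function.extend_apply' _ _ _ hi])
    (fun i ↦ by simp [he.extend_apply])).symm

theorem mulVec_extend_zero_comp {e : m → n} (he : Function.Injective e) (M : Matrix n n R)
    (x : m → R) : (M *ᵥ Function.extend e x 0) ∘ e = M.submatrix e e *ᵥ x := by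
  ext i
  simp only [Function.comp_apply, mulVec, dotProduct_comm (M (e i)),
    extend_zero_dotProduct he]
  exact dotProduct_comm _ _

theorem quadGain_submatrix {e : m → n} (he : Function.Injective e) (M : Matrix n n R)
    (u : n → R) (x : m → R) :
    quadGain (M.submatrix e e) (u ∘ e) x = quadGain M u (Function.extend e x 0) := by
  rw [quadGain, quadGain, extend_zero_dotProduct he, extend_zero_dotProduct he,
    mulVec_extend_zero_comp he]

end CommRing

theorem PosSemidef.quadGain_le [Field R] [LinearOrder R] [IsStrictOrderedRing R] [StarRing R]
    [TrivialStar R] [DecidableEq n] {M : Matrix n n R} (hM : M.PosSemidef) (hdet : IsUnit M.det)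
    (u w : n → R) : quadGain M u w ≤ u ⬝ᵥ M⁻¹ *ᵥ u := by
  set y := M⁻¹ *ᵥ u
  have hMy : M *ᵥ y = u := by rw [mulVec_mulVec, mul_nonsing_inv M hdet, one_mulVec]
  have hyM : y ᵥ* M = u := by
    rw [← mulVec_transpose, (isHermitian_iff_isSymm.mp hM.isHermitian).eq, hMy]
  -- `quadGain M u w = yᵀ M y - (w - y)ᵀ M (w - y)`
  have hsq := hM.dotProduct_mulVec_nonneg (w - y)
  simp only [star_trivial, mulVec_sub, sub_dotProduct, dotProduct_sub, hMy,
    dotProduct_mulVec y, hyM] at hsq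
  rw [quadGain, dotProduct_comm u y]
  linarith [dotProduct_comm w u]

end Matrix

/-- for a positive definite matrix `Cov` indexed by a finite set `F`, a vector
`u : F → ℝ` and a subset `F₁ ⊆ F` with principal submatrix `A = Cov[F₁, F₁]` and restricted
vector `u₁`, the separation induced by the subset is no larger than the full separation:
`u₁ᵀ A⁻¹ u₁ ≤ uᵀ Cov⁻¹ u`. -/
theorem separation_submatrix_le
    {F : Type*} [Fintype F] [DecidableEq F]
    (Cov : Matrix F F ℝ) (hCov : Cov.PosDef) (u : F → ℝ) (F₁ : Finset F) :
    (fun i : F₁ => u i) ⬝ᵥ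
        (Cov.submatrix (Subtype.val : F₁ → F) Subtype.val)⁻¹.mulVec (fun i : F₁ => u i)
      ≤ u ⬝ᵥ Cov⁻¹.mulVec u := by
  have hA := hCov.submatrix Subtype.val_injective (m := F₁)
  calc _ = quadGain (Cov.submatrix Subtype.val Subtype.val) (u ∘ Subtype.val) _ :=
        (quadGain_inv_mulVec ((isUnit_iff_isUnit_det _).mp hA.isUnit) _).symm
    _ = quadGain Cov u _ := quadGain_submatrix Subtype.val_injective Cov u _
    _ ≤ _ := hCov.posSemidef.quadGain_le ((isUnit_iff_isUnit_det _).mp hCov.isUnit) u _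
end

section
/- Let Σ be a positive definite real matrix indexed by a finite set F, let u ∈ ℝ^F with u ≠ 0, and let F₁ ⊆ F with A = Σ[F₁, F₁] and u₁ the restriction of u to F₁. Then the ratio of separation γ = S_{F₁}/S_F satisfies the deterministic lower bound γ ≥ (λ_min(Σ⁻¹)/λ_max(Σ⁻¹)) · (‖u₁‖²/‖u‖²). -/
/-!
In the Loewner order, `λ_min(Σ⁻¹) ≤ Σ⁻¹` means `Σ ≤ λ_min(Σ⁻¹)⁻¹`. This scalar upper bound passes
to every principal submatrix `A`, and inverting once more gives `λ_min(Σ⁻¹) ≤ A⁻¹`, so that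
`S_{F₁} ≥ λ_min(Σ⁻¹) ‖u₁‖²`. Together with `S_F ≤ λ_max(Σ⁻¹) ‖u‖²` this is the bound.
-/

open Matrix
open scoped MatrixOrder ComplexOrder

namespace Matrix

variable {n : Type*} [Fintype n] [DecidableEq n]

lemma spectrum_nonsing_inv {R α : Type*} [Field R] [CommRing α] [Algebra R α]
    {M : Matrix n n α} (hM : IsUnit M) : spectrum R M⁻¹ = (spectrum R M)⁻¹ := by
  obtain ⟨U, rfl⟩ := hM
  rw [← coe_units_inv, spectrum.map_inv]

section RCLike

variable {𝕜 : Type*} [RCLike 𝕜] {M : Matrix n n 𝕜}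

lemma IsHermitian.algebraMap_le_iff_forall_le_eigenvalues (hM : M.IsHermitian) {r : ℝ} :
    algebraMap ℝ _ r ≤ M ↔ ∀ i, r ≤ hM.eigenvalues i := by
  rw [algebraMap_le_iff_le_spectrum (hM : IsSelfAdjoint M), hM.spectrum_real_eq_range_eigenvalues,
    Set.forall_mem_range]

lemma IsHermitian.le_algebraMap_iff_forall_eigenvalues_le (hM : M.IsHermitian) {r : ℝ} :
    M ≤ algebraMap ℝ _ r ↔ ∀ i, hM.eigenvalues i ≤ r := by
  rw [le_algebraMap_iff_spectrum_le (hM : IsSelfAdjoint M), hM.spectrum_real_eq_range_eigenvalues,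
    Set.forall_mem_range]

lemma IsHermitian.algebraMap_iInf_eigenvalues_le (hM : M.IsHermitian) :
    algebraMap ℝ _ (⨅ i, hM.eigenvalues i) ≤ M :=
  hM.algebraMap_le_iff_forall_le_eigenvalues.2 fun i ↦ ciInf_le (Set.finite_range _).bddBelow i

lemma IsHermitian.le_algebraMap_iSup_eigenvalues (hM : M.IsHermitian) :
    M ≤ algebraMap ℝ _ (⨆ i, hM.eigenvalues i) :=
  hM.le_algebraMap_iff_forall_eigenvalues_le.2 fun i ↦ le_ciSup (Set.finite_range _).bddAbove i

lemma PosDef.iInf_eigenvalues_pos [Nonempty n] (hM : M.PosDef) : 0 < ⨅ i, hM.1.eigenvalues i := by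
  obtain ⟨i, hi⟩ := exists_eq_ciInf_of_finite (f := hM.1.eigenvalues)
  rw [← hi]
  exact hM.eigenvalues_pos i

lemma PosDef.algebraMap_le_inv_iff (hM : M.PosDef) {c : ℝ} (hc : 0 < c) :
    algebraMap ℝ _ c ≤ M⁻¹ ↔ M ≤ algebraMap ℝ _ c⁻¹ := by
  have hpos : ∀ x ∈ spectrum ℝ M, 0 < x := by
    rw [hM.1.spectrum_real_eq_range_eigenvalues]
    rintro _ ⟨i, rfl⟩
    exact hM.eigenvalues_pos i
  rw [algebraMap_le_iff_le_spectrum (hM.inv.1 : IsSelfAdjoint M⁻¹),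
    le_algebraMap_iff_spectrum_le (hM.1 : IsSelfAdjoint M), spectrum_nonsing_inv hM.isUnit]
  refine ⟨fun h x hx ↦ ?_, fun h x hx ↦ ?_⟩
  · exact (le_inv_comm₀ hc (hpos x hx)).1 (h x⁻¹ (by rwa [Set.inv_mem_inv]))
  · simpa using (le_inv_comm₀ hc (hpos _ hx)).2 (h _ hx)

lemma submatrix_le_algebraMap {m : Type*} [Fintype m] [DecidableEq m] {c : ℝ}
    (h : M ≤ algebraMap ℝ _ c) {e : m → n} (he : Function.Injective e) :
    M.submatrix e e ≤ algebraMap ℝ _ c := by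
  have := (le_iff.1 h).submatrix e
  rw [le_iff]
  convert this using 1
  ext i j
  simp [algebraMap_eq_diagonal, diagonal_apply, he.eq_iff]

end RCLike

variable {M : Matrix n n ℝ} {c : ℝ}

lemma dotProduct_mulVec_le_of_le_algebraMap (h : M ≤ algebraMap ℝ _ c) (x : n → ℝ) :
    x ⬝ᵥ M *ᵥ x ≤ c * (x ⬝ᵥ x) := by
  have := (le_iff.1 h).dotProduct_mulVec_nonneg x
  rw [Algebra.algebraMap_eq_smul_one, sub_mulVec, smul_mulVec, one_mulVec, dotProduct_sub,
    dotProduct_smul, smul_eq_mul, star_trivial] at this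
  linarith

lemma le_dotProduct_mulVec_of_algebraMap_le (h : algebraMap ℝ _ c ≤ M) (x : n → ℝ) :
    c * (x ⬝ᵥ x) ≤ x ⬝ᵥ M *ᵥ x := by
  have := (le_iff.1 h).dotProduct_mulVec_nonneg x
  rw [Algebra.algebraMap_eq_smul_one, sub_mulVec, smul_mulVec, one_mulVec, dotProduct_sub,
    dotProduct_smul, smul_eq_mul, star_trivial] at this
  linarith

end Matrix

lemma EuclideanSpace.norm_equiv_symm_sq {ι : Type*} [Fintype ι] (v : ι → ℝ) :
    ‖(WithLp.equiv 2 (ι → ℝ)).symm v‖ ^ 2 = v ⬝ᵥ v := by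
  rw [EuclideanSpace.norm_sq_eq]
  simp [dotProduct, sq]

/-- for a positive definite matrix `Cov` indexed by a finite set `F`, `u ≠ 0` and a
subset `F₁ ⊆ F` with principal submatrix `A = Cov[F₁, F₁]` and restricted vector `u₁`, the ratio
of separation `γ = S_{F₁} / S_F` satisfies the deterministic lower bound
`γ ≥ (λ_min(Cov⁻¹) / λ_max(Cov⁻¹)) · (‖u₁‖² / ‖u‖²)`. -/
theorem ratio_of_separation_lower_bound
    {F : Type*} [Fintype F] [DecidableEq F]
    (Cov : Matrix F F ℝ) (hCov : Cov.PosDef) (u : F → ℝ) (hu : u ≠ 0) (F₁ : Finset F) :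
    ((⨅ i, hCov.1.inv.eigenvalues i) / (⨆ i, hCov.1.inv.eigenvalues i))
        * (‖(WithLp.equiv 2 (F₁ → ℝ)).symm (fun i : F₁ => u i)‖ ^ 2
            / ‖(WithLp.equiv 2 (F → ℝ)).symm u‖ ^ 2)
      ≤ ((fun i : F₁ => u i) ⬝ᵥ
            (Cov.submatrix (Subtype.val : F₁ → F) Subtype.val)⁻¹.mulVec (fun i : F₁ => u i))
          / (u ⬝ᵥ Cov⁻¹.mulVec u) := by
  obtain ⟨i₀, -⟩ := Function.ne_iff.mp hu
  have : Nonempty F := ⟨i₀⟩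
  set A := Cov.submatrix (Subtype.val : F₁ → F) Subtype.val
  set u₁ : F₁ → ℝ := fun i => u i
  have hlmin := hCov.inv.iInf_eigenvalues_pos
  have hCov_le : Cov ≤ algebraMap ℝ _ (⨅ i, hCov.1.inv.eigenvalues i)⁻¹ :=
    (hCov.algebraMap_le_inv_iff hlmin).1 hCov.1.inv.algebraMap_iInf_eigenvalues_le
  have hA : A.PosDef := hCov.submatrix Subtype.val_injective
  have hA_inv : algebraMap ℝ _ (⨅ i, hCov.1.inv.eigenvalues i) ≤ A⁻¹ :=
    (hA.algebraMap_le_inv_iff hlmin).2 (submatrix_le_algebraMap hCov_le Subtype.val_injective)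
  have hS₁_nonneg : 0 ≤ u₁ ⬝ᵥ A⁻¹ *ᵥ u₁ := by
    simpa using hA.inv.posSemidef.dotProduct_mulVec_nonneg u₁
  have hS_pos : 0 < u ⬝ᵥ Cov⁻¹ *ᵥ u := by simpa using hCov.inv.dotProduct_mulVec_pos hu
  rw [EuclideanSpace.norm_equiv_symm_sq, EuclideanSpace.norm_equiv_symm_sq, div_mul_div_comm]
  exact div_le_div₀ hS₁_nonneg (le_dotProduct_mulVec_of_algebraMap_le hA_inv u₁) hS_pos
    (dotProduct_mulVec_le_of_le_algebraMap hCov.1.inv.le_algebraMap_iSup_eigenvalues u)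
end

section
/- (Thinning preserves the ratio of separation, quantitative version of Theorem 1.) For each p, let Σ_p be a p×p positive definite real matrix and u_p ∈ ℝᵖ, and suppose there exist constants M > 0, c > 0 and K ≥ 1, independent of p, such that |u_{p,i}| ≤ M for all i, ‖u_p‖² ≥ c·p, and λ_max(Σ_p⁻¹)/λ_min(Σ_p⁻¹) ≤ K. Let F₁ be a random subset of {1, …, p} obtained by including each coordinate independently with probability 1/2, and let γ_p = S_{F₁}/S_F be the ratio of separation of F₁. Then for every ε with 0 < ε < 1/2, P( γ_p ≥ (1/2 − ε)/K ) → 1 as p → ∞. -/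
open MeasureTheory Matrix
open scoped ENNReal NNReal

/-- The Bernoulli law on `Bool` with success probability `r`. -/
noncomputable def bernoulliBoolLaw (r : ℝ≥0∞) : Measure Bool :=
  r • Measure.dirac true + (1 - r) • Measure.dirac false

/-- The law of a random subset of `{1, …, p}` (encoded by its indicator in `Fin p → Bool`)
obtained by including each coordinate independently with probability `r`. -/
noncomputable def thinningMeasure (p : ℕ) (r : ℝ≥0∞) : Measure (Fin p → Bool) :=
  Measure.pi fun _ => bernoulliBoolLaw r

/-- The separation `S_F = uᵀ Cov⁻¹ u` of the full feature set. -/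
noncomputable def separation {n : Type*} [Fintype n] [DecidableEq n]
    (Cov : Matrix n n ℝ) (u : n → ℝ) : ℝ :=
  u ⬝ᵥ Cov⁻¹.mulVec u

/-- The separation `S_{F₁} = u₁ᵀ A⁻¹ u₁` induced by a feature subset `F₁`, where `A` is the
principal submatrix of `Cov` on `F₁` and `u₁` the restriction of `u` (it is `0` if `F₁ = ∅`). -/
noncomputable def subSeparation {n : Type*} [Fintype n] [DecidableEq n]
    (Cov : Matrix n n ℝ) (u : n → ℝ) (s : Finset n) : ℝ :=
  separation (Cov.submatrix (Subtype.val : s → n) Subtype.val) (fun i => u i)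

/-! Let `λ ≤ Λ` be the extreme eigenvalues of `Σ⁻¹`, so `Λ / λ ≤ K`. The Rayleigh bound gives
`S_F ≤ Λ ‖u‖²`. By Cauchy–Schwarz, `λ ≤ Σ⁻¹` is equivalent to `λ Σ ≤ 1` in the Loewner order;
the latter passes to principal submatrices, so `S_{F₁} ≥ λ ‖u_{F₁}‖²` and
`γ ≥ ‖u_{F₁}‖² / (K ‖u‖²)`. Under thinning, `‖u_{F₁}‖²` has mean `‖u‖² / 2` and variance
`∑ uᵢ⁴ / 4 ≤ M² ‖u‖² / 4`, so by Chebyshev it drops below `(1/2 - ε) ‖u‖²` with probability at most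
`M² / (4 ε² ‖u‖²) ≤ M² / (4 ε² c p) → 0`. -/

open Filter Topology ProbabilityTheory

lemma mul_le_of_mul_sq_le_mul {α : Type*} [Field α] [LinearOrder α] [IsStrictOrderedRing α]
    {c q r : α} (hq : 0 ≤ q) (hr : 0 ≤ r) (h : c * q ^ 2 ≤ r * q) :
    c * q ≤ r := by
  rcases hq.eq_or_lt with rfl | hq
  · simpa using hr
  exact le_of_mul_le_mul_right (by nlinarith) hq

namespace Matrix

variable {n m : Type*} [Fintype n] [Fintype m]

lemma PosSemidef.sq_dotProduct_mulVec_le {A : Matrix n n ℝ} (hA : A.PosSemidef) (x y : n → ℝ) :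
    (x ⬝ᵥ A *ᵥ y) ^ 2 ≤ (x ⬝ᵥ A *ᵥ x) * (y ⬝ᵥ A *ᵥ y) := by
  let := A.toSeminormedAddCommGroup hA
  let := A.toInnerProductSpace hA
  have hinner (a b : n → ℝ) : @inner ℝ _ _ a b = a ⬝ᵥ A *ᵥ b := by
    rw [dotProduct_comm]; rfl
  simpa only [hinner, sq] using real_inner_mul_inner_self_le x y

lemma dotProduct_self_eq_sum_sq (x : n → ℝ) : x ⬝ᵥ x = ∑ i, x i ^ 2 := by
  simp only [dotProduct, sq]

variable [DecidableEq n] [DecidableEq m]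

lemma IsHermitian.exists_dotProduct_mulVec_eq_sum_eigenvalues {A : Matrix n n ℝ}
    (hA : A.IsHermitian) (x : n → ℝ) :
    ∃ y : n → ℝ, x ⬝ᵥ A *ᵥ x = ∑ i, hA.eigenvalues i * y i ^ 2 ∧ x ⬝ᵥ x = ∑ i, y i ^ 2 := by
  set U : Matrix n n ℝ := (hA.eigenvectorUnitary : Matrix n n ℝ)
  have hUU : U * star U = 1 := mem_unitaryGroup_iff.mp hA.eigenvectorUnitary.2
  have hUT : (star U)ᵀ = U := by
    rw [star_eq_conjTranspose, ← conjTranspose_eq_transpose_of_trivial,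
      conjTranspose_conjTranspose]
  refine ⟨star U *ᵥ x, ?_, ?_⟩
  · conv_lhs => rw [hA.spectral_theorem, Unitary.conjStarAlgAut_apply]
    rw [← mulVec_mulVec, ← mulVec_mulVec, dotProduct_mulVec x, ← mulVec_transpose,
      ← conjTranspose_eq_transpose_of_trivial, ← star_eq_conjTranspose]
    simp only [dotProduct, mulVec_diagonal, Function.comp_apply, RCLike.ofReal_real_eq_id, id_eq]
    exact Finset.sum_congr rfl fun i _ => by ring
  · have hnorm : (star U *ᵥ x) ⬝ᵥ (star U *ᵥ x) = x ⬝ᵥ x := by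
      rw [dotProduct_mulVec, ← mulVec_transpose, mulVec_mulVec, hUT, hUU, one_mulVec]
    rw [← hnorm]
    exact Finset.sum_congr rfl fun i _ => sq _ |>.symm

lemma IsHermitian.iInf_eigenvalues_mul_le {A : Matrix n n ℝ} (hA : A.IsHermitian) (x : n → ℝ) :
    (⨅ i, hA.eigenvalues i) * (x ⬝ᵥ x) ≤ x ⬝ᵥ A *ᵥ x := by
  obtain ⟨y, hAx, hx⟩ := hA.exists_dotProduct_mulVec_eq_sum_eigenvalues x
  rw [hAx, hx, Finset.mul_sum]
  gcongr with i
  exact ciInf_le (Set.finite_range _).bddBelow i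

lemma IsHermitian.dotProduct_mulVec_le_iSup_eigenvalues_mul {A : Matrix n n ℝ}
    (hA : A.IsHermitian) (x : n → ℝ) :
    x ⬝ᵥ A *ᵥ x ≤ (⨆ i, hA.eigenvalues i) * (x ⬝ᵥ x) := by
  obtain ⟨y, hAx, hx⟩ := hA.exists_dotProduct_mulVec_eq_sum_eigenvalues x
  rw [hAx, hx, Finset.mul_sum]
  gcongr with i
  exact le_ciSup (Set.finite_range _).bddAbove i

lemma posSemidef_one_sub_smul_iff {A : Matrix n n ℝ} (hA : A.IsHermitian) (c : ℝ) :
    (1 - c • A).PosSemidef ↔ ∀ x, c * (x ⬝ᵥ A *ᵥ x) ≤ x ⬝ᵥ x := by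
  rw [posSemidef_iff_dotProduct_mulVec, and_iff_right (isHermitian_one.sub (hA.smul (.all c)))]
  simp [sub_mulVec, smul_mulVec, dotProduct_sub]

lemma IsHermitian.mul_dotProduct_submatrix_mulVec_le {A : Matrix n n ℝ} (hA : A.IsHermitian)
    {c : ℝ} (h : ∀ x, c * (x ⬝ᵥ A *ᵥ x) ≤ x ⬝ᵥ x) {e : m → n} (he : Function.Injective e)
    (z : m → ℝ) : c * (z ⬝ᵥ A.submatrix e e *ᵥ z) ≤ z ⬝ᵥ z := by
  have hsub := ((posSemidef_one_sub_smul_iff hA c).2 h).submatrix e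
  rw [show (1 - c • A).submatrix e e = 1 - c • A.submatrix e e by
    rw [← submatrix_one e he]; rfl] at hsub
  exact (posSemidef_one_sub_smul_iff (hA.submatrix e) c).1 hsub z

lemma PosDef.mul_dotProduct_mulVec_le_of_le_inv {A : Matrix n n ℝ} (hA : A.PosDef) {c : ℝ}
    (h : ∀ y, c * (y ⬝ᵥ y) ≤ y ⬝ᵥ A⁻¹ *ᵥ y) (x : n → ℝ) :
    c * (x ⬝ᵥ A *ᵥ x) ≤ x ⬝ᵥ x := by
  have hq : 0 ≤ x ⬝ᵥ A *ᵥ x := by simpa using hA.posSemidef.dotProduct_mulVec_nonneg x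
  have hx : 0 ≤ x ⬝ᵥ x := by simpa using dotProduct_star_self_nonneg x
  have hAx : c * ((A *ᵥ x) ⬝ᵥ (A *ᵥ x)) ≤ x ⬝ᵥ A *ᵥ x := by
    simpa [mulVec_mulVec, nonsing_inv_mul _ hA.det_pos.ne'.isUnit, dotProduct_comm]
      using h (A *ᵥ x)
  have hcs : (x ⬝ᵥ A *ᵥ x) ^ 2 ≤ (x ⬝ᵥ x) * ((A *ᵥ x) ⬝ᵥ (A *ᵥ x)) := by
    simpa using PosSemidef.one.sq_dotProduct_mulVec_le x (A *ᵥ x)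
  refine mul_le_of_mul_sq_le_mul hq hx ?_
  rcases le_or_gt c 0 with hc | hc
  · nlinarith
  · nlinarith [mul_le_mul_of_nonneg_left hcs hc.le, mul_le_mul_of_nonneg_left hAx hx]

lemma PosDef.mul_dotProduct_le_inv_of_mul_le {A : Matrix n n ℝ} (hA : A.PosDef) {c : ℝ}
    (h : ∀ x, c * (x ⬝ᵥ A *ᵥ x) ≤ x ⬝ᵥ x) (y : n → ℝ) :
    c * (y ⬝ᵥ y) ≤ y ⬝ᵥ A⁻¹ *ᵥ y := by
  have hq : 0 ≤ y ⬝ᵥ A⁻¹ *ᵥ y := by simpa using hA.inv.posSemidef.dotProduct_mulVec_nonneg y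
  have hy : 0 ≤ y ⬝ᵥ y := by simpa using dotProduct_star_self_nonneg y
  -- Cauchy–Schwarz for the form of `A⁻¹`, at `y` and `A y`
  have hcs : (y ⬝ᵥ y) ^ 2 ≤ (y ⬝ᵥ A⁻¹ *ᵥ y) * (y ⬝ᵥ A *ᵥ y) := by
    simpa [mulVec_mulVec, nonsing_inv_mul _ hA.det_pos.ne'.isUnit, dotProduct_comm]
      using hA.inv.posSemidef.sq_dotProduct_mulVec_le y (A *ᵥ y)
  have hy' := h y
  refine mul_le_of_mul_sq_le_mul hy hq ?_
  rcases le_or_gt c 0 with hc | hc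
  · nlinarith
  · nlinarith [mul_le_mul_of_nonneg_left hcs hc.le, mul_le_mul_of_nonneg_left hy' hq]

end Matrix

section Separation

variable {n : Type*} [Fintype n] [DecidableEq n]

lemma iInf_eigenvalues_inv_mul_le_subSeparation {Cov : Matrix n n ℝ} (hCov : Cov.PosDef)
    (u : n → ℝ) (s : Finset n) :
    (⨅ i, hCov.1.inv.eigenvalues i) * ∑ i ∈ s, u i ^ 2 ≤ subSeparation Cov u s := by
  have hCov' := hCov.mul_dotProduct_mulVec_le_of_le_inv hCov.1.inv.iInf_eigenvalues_mul_le
  have hsub := (hCov.submatrix (Subtype.val_injective (p := (· ∈ s))))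
    |>.mul_dotProduct_le_inv_of_mul_le
      (hCov.1.mul_dotProduct_submatrix_mulVec_le hCov' Subtype.val_injective) (fun i => u i)
  have hnorm : (fun i : s => u i) ⬝ᵥ (fun i : s => u i) = ∑ i ∈ s, u i ^ 2 := by
    rw [dotProduct_self_eq_sum_sq]
    exact Finset.sum_coe_sort s (u · ^ 2)
  rwa [hnorm] at hsub

lemma separation_le_iSup_eigenvalues_inv_mul {Cov : Matrix n n ℝ} (hCov : Cov.PosDef)
    (u : n → ℝ) : separation Cov u ≤ (⨆ i, hCov.1.inv.eigenvalues i) * ∑ i, u i ^ 2 := by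
  simpa only [separation, dotProduct_self_eq_sum_sq] using
    hCov.1.inv.dotProduct_mulVec_le_iSup_eigenvalues_mul u

lemma div_le_subSeparation_div_separation {Cov : Matrix n n ℝ} (hCov : Cov.PosDef)
    {u : n → ℝ} (hm : 0 < ∑ i, u i ^ 2) {K : ℝ}
    (hK : (⨆ i, hCov.1.inv.eigenvalues i) / (⨅ i, hCov.1.inv.eigenvalues i) ≤ K)
    {θ : ℝ} (hθ : 0 ≤ θ) {s : Finset n} (hs : θ * ∑ i, u i ^ 2 ≤ ∑ i ∈ s, u i ^ 2) :
    θ / K ≤ subSeparation Cov u s / separation Cov u := by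
  set lo := ⨅ i, hCov.1.inv.eigenvalues i
  set hi := ⨆ i, hCov.1.inv.eigenvalues i
  set m := ∑ i, u i ^ 2
  have : Nonempty n := Finset.univ_nonempty_iff.mp (Finset.nonempty_of_sum_ne_zero hm.ne')
  have hlo : 0 < lo := by
    obtain ⟨i, hi⟩ := exists_eq_ciInf_of_finite (f := hCov.1.inv.eigenvalues)
    exact (hCov.inv.eigenvalues_pos i).trans_eq hi
  have hu : u ≠ 0 := by
    rintro rfl
    simp [m] at hm
  have hsep : 0 < separation Cov u := by simpa [separation] using hCov.inv.dotProduct_mulVec_pos hu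
  have hsep_le := separation_le_iSup_eigenvalues_inv_mul hCov u
  have hsub := iInf_eigenvalues_inv_mul_le_subSeparation hCov u s
  have hhi : 0 < hi := pos_of_mul_pos_left (hsep.trans_le hsep_le) hm.le
  have hK₀ : 0 < K := (div_pos hhi hlo).trans_le hK
  calc θ / K ≤ θ * lo / hi := by
        rw [div_le_div_iff₀ hK₀ hhi]
        nlinarith [(div_le_iff₀ hlo).1 hK]
    _ = lo * (θ * m) / (hi * m) := by field_simp
    _ ≤ subSeparation Cov u s / separation Cov u :=
        div_le_div₀ (by nlinarith [Finset.sum_nonneg fun i (_ : i ∈ s) => sq_nonneg (u i)])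
          ((mul_le_mul_of_nonneg_left hs hlo.le).trans hsub) hsep hsep_le

end Separation

lemma isProbabilityMeasure_bernoulliBoolLaw {r : ℝ≥0∞} (hr : r ≤ 1) :
    IsProbabilityMeasure (bernoulliBoolLaw r) := by
  constructor
  simp [bernoulliBoolLaw, add_tsub_cancel_of_le hr]

lemma isProbabilityMeasure_thinningMeasure (p : ℕ) {r : ℝ≥0∞} (hr : r ≤ 1) :
    IsProbabilityMeasure (thinningMeasure p r) := by
  have := isProbabilityMeasure_bernoulliBoolLaw hr
  unfold thinningMeasure
  infer_instance

lemma integral_bernoulliBoolLaw {r : ℝ≥0∞} (hr : r ≤ 1) (f : Bool → ℝ) :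
    ∫ b, f b ∂bernoulliBoolLaw r = r.toReal * f true + (1 - r.toReal) * f false := by
  have := isProbabilityMeasure_bernoulliBoolLaw hr
  have hf : Integrable f (bernoulliBoolLaw r) := .of_finite
  rw [bernoulliBoolLaw] at hf ⊢
  rw [integral_add_measure hf.left_of_add_measure hf.right_of_add_measure,
    integral_smul_measure, integral_smul_measure, integral_dirac, integral_dirac,
    ENNReal.toReal_sub_of_le hr ENNReal.one_ne_top, ENNReal.toReal_one, smul_eq_mul, smul_eq_mul]

lemma variance_ite_bernoulliBoolLaw {r : ℝ≥0∞} (hr : r ≤ 1) (a : ℝ) :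
    Var[fun b => if b then a else 0; bernoulliBoolLaw r]
      = r.toReal * (1 - r.toReal) * a ^ 2 := by
  have := isProbabilityMeasure_bernoulliBoolLaw hr
  rw [variance_eq_sub .of_discrete]
  simp only [Pi.pow_apply]
  rw [integral_bernoulliBoolLaw hr, integral_bernoulliBoolLaw hr]
  simp only [if_true, Bool.false_eq_true, if_false]
  ring

lemma thinningMeasure_le_abs_sum_sub_le (p : ℕ) {r : ℝ≥0∞} (hr : r ≤ 1) (a : Fin p → ℝ) {t : ℝ}
    (ht : 0 < t) :
    thinningMeasure p r
        {ω | t ≤ |∑ i ∈ Finset.univ.filter (fun i => ω i = true), a i - r.toReal * ∑ i, a i|}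
      ≤ ENNReal.ofReal ((r.toReal * (1 - r.toReal) * ∑ i, a i ^ 2) / t ^ 2) := by
  have := isProbabilityMeasure_bernoulliBoolLaw hr
  have := isProbabilityMeasure_thinningMeasure p hr
  set X : Fin p → (Bool → ℝ) := fun i b => if b then a i else 0
  have hX (ω : Fin p → Bool) :
      ∑ i ∈ Finset.univ.filter (fun i => ω i = true), a i = (∑ i, fun ω => X i (ω i)) ω := by
    simp [X, Finset.sum_filter, Finset.sum_apply]
  have hmean : (thinningMeasure p r)[∑ i, fun ω => X i (ω i)] = r.toReal * ∑ i, a i := by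
    simp only [Finset.sum_apply]
    rw [integral_finsetSum _ fun i _ => .of_finite, Finset.mul_sum]
    refine Finset.sum_congr rfl fun i _ => ?_
    rw [thinningMeasure, integral_comp_eval .of_discrete, integral_bernoulliBoolLaw hr]
    simp [X]
  have hvar : Var[∑ i, fun ω => X i (ω i); thinningMeasure p r]
      = r.toReal * (1 - r.toReal) * ∑ i, a i ^ 2 := by
    rw [thinningMeasure, variance_sum_pi fun i => .of_discrete, Finset.mul_sum]
    exact Finset.sum_congr rfl fun i _ => variance_ite_bernoulliBoolLaw hr (a i)
  simp_rw [hX, ← hmean, ← hvar]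
  exact meas_ge_le_variance_div_sq .of_discrete ht

lemma tendsto_measure_of_measure_compl_le {ι : Type*} {l : Filter ι} {Ω : ι → Type*}
    [∀ p, MeasurableSpace (Ω p)] (μ : ∀ p, Measure (Ω p)) [∀ p, IsProbabilityMeasure (μ p)]
    {G : ∀ p, Set (Ω p)} {δ : ι → ℝ} (hδ : Tendsto δ l (𝓝 0))
    (hG : ∀ᶠ p in l, μ p (G p)ᶜ ≤ ENNReal.ofReal (δ p)) :
    Tendsto (fun p => μ p (G p)) l (𝓝 1) := by
  have hlow : Tendsto (fun p => 1 - ENNReal.ofReal (δ p)) l (𝓝 1) := by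
    simpa using ENNReal.Tendsto.sub tendsto_const_nhds (ENNReal.tendsto_ofReal hδ)
      (.inl ENNReal.one_ne_top)
  refine tendsto_of_tendsto_of_tendsto_of_le_of_le' hlow tendsto_const_nhds ?_
    (.of_forall fun p => prob_le_one)
  filter_upwards [hG] with p hp
  rw [tsub_le_iff_right]
  calc 1 = μ p (G p ∪ (G p)ᶜ) := by rw [Set.union_compl_self, measure_univ]
    _ ≤ μ p (G p) + μ p (G p)ᶜ := measure_union_le _ _
    _ ≤ μ p (G p) + ENNReal.ofReal (δ p) := by gcongr

lemma thinningMeasure_compl_ratio_le {p : ℕ} {Cov : Matrix (Fin p) (Fin p) ℝ} (hCov : Cov.PosDef)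
    {u : Fin p → ℝ} (hm : 0 < ∑ i, u i ^ 2) {K : ℝ}
    (hK : (⨆ i, hCov.1.inv.eigenvalues i) / (⨅ i, hCov.1.inv.eigenvalues i) ≤ K)
    {M : ℝ} (hM : ∀ i, |u i| ≤ M) {ε : ℝ} (hε : 0 < ε) (hε' : ε < 1 / 2) :
    thinningMeasure p 2⁻¹
        {ω | (1 / 2 - ε) / K ≤
          subSeparation Cov u (Finset.univ.filter fun i => ω i = true) / separation Cov u}ᶜ
      ≤ ENNReal.ofReal (M ^ 2 / (4 * ε ^ 2 * ∑ i, u i ^ 2)) := by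
  set m := ∑ i, u i ^ 2
  have hbad : {ω : Fin p → Bool | (1 / 2 - ε) / K ≤
      subSeparation Cov u (Finset.univ.filter fun i => ω i = true) / separation Cov u}ᶜ ⊆
      {ω | ε * m ≤ |∑ i ∈ Finset.univ.filter (fun i => ω i = true), u i ^ 2
        - (2⁻¹ : ℝ≥0∞).toReal * ∑ i, u i ^ 2|} := by
    intro ω hω
    by_contra h
    refine hω (div_le_subSeparation_div_separation hCov hm hK (by linarith) ?_)
    simp only [Set.mem_ofPred_eq, not_le, abs_lt, ENNReal.toReal_inv, ENNReal.toReal_ofNat] at h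
    linarith [h.1]
  have hfourth : ∑ i, (u i ^ 2) ^ 2 ≤ M ^ 2 * m := by
    rw [Finset.mul_sum]
    gcongr with i
    rw [sq (u i ^ 2)]
    exact mul_le_mul_of_nonneg_right (sq_le_sq' (abs_le.mp (hM i)).1 (abs_le.mp (hM i)).2)
      (sq_nonneg _)
  calc _ ≤ _ := measure_mono hbad
    _ ≤ _ := thinningMeasure_le_abs_sum_sub_le p (by norm_num) (u · ^ 2) (by positivity)
    _ ≤ _ := by
      refine ENNReal.ofReal_le_ofReal ?_
      simp only [ENNReal.toReal_inv, ENNReal.toReal_ofNat]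
      calc (2⁻¹ * (1 - 2⁻¹) * ∑ i, (u i ^ 2) ^ 2) / (ε * m) ^ 2
          ≤ 2⁻¹ * (1 - 2⁻¹) * (M ^ 2 * m) / (ε * m) ^ 2 := by gcongr
        _ = M ^ 2 / (4 * ε ^ 2 * m) := by field_simp; ring

theorem thinning_preserves_ratio_of_separation_general
    (Covs : ∀ p : ℕ, Matrix (Fin p) (Fin p) ℝ) (us : ∀ p : ℕ, Fin p → ℝ)
    (hpos : ∀ p, (Covs p).PosDef)
    (M c K : ℝ) (hc : 0 < c)
    (hbd : ∀ p i, |us p i| ≤ M)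
    (hnorm : ∀ p : ℕ, c * p ≤ ∑ i, us p i ^ 2)
    (hcond : ∀ p : ℕ,
      (⨆ i, ((hpos p).1.inv.eigenvalues) i) / (⨅ i, ((hpos p).1.inv.eigenvalues) i) ≤ K)
    (ε : ℝ) (hε : 0 < ε) (hε' : ε < 1 / 2) :
    Filter.Tendsto
      (fun p => thinningMeasure p 2⁻¹
        {ω | (1 / 2 - ε) / K ≤
          subSeparation (Covs p) (us p) (Finset.univ.filter fun i => ω i = true)
            / separation (Covs p) (us p)})
      Filter.atTop (nhds 1) := by
  have := fun p => isProbabilityMeasure_thinningMeasure p (r := 2⁻¹) (by norm_num)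
  refine tendsto_measure_of_measure_compl_le (fun p => thinningMeasure p 2⁻¹)
    (tendsto_const_div_atTop_nhds_zero_nat (M ^ 2 / (4 * ε ^ 2 * c))) ?_
  filter_upwards [eventually_gt_atTop 0] with p hp
  have hcp : 0 < c * p := by positivity
  refine (thinningMeasure_compl_ratio_le (hpos p) (hcp.trans_le (hnorm p)) (hcond p) (hbd p) hε hε')
    |>.trans (ENNReal.ofReal_le_ofReal ?_)
  rw [div_div]
  refine div_le_div_of_nonneg_left (sq_nonneg M) (by positivity) ?_
  linarith [mul_le_mul_of_nonneg_left (hnorm p) (by positivity : (0 : ℝ) ≤ 4 * ε ^ 2)]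

/-- thinning preserves the ratio of separation, `J = 2`: under uniform bounds
`|u_{p,i}| ≤ M`, `‖u_p‖² ≥ c·p` and `λ_max(Cov_p⁻¹)/λ_min(Cov_p⁻¹) ≤ K`, if `F₁` is a random
subset of `{1, …, p}` including each coordinate independently with probability `1/2`, then for
every `0 < ε < 1/2`, `P(γ_p ≥ (1/2 - ε)/K) → 1` as `p → ∞`, where `γ_p = S_{F₁}/S_F`. -/
theorem thinning_preserves_ratio_of_separation
    (Covs : ∀ p : ℕ, Matrix (Fin p) (Fin p) ℝ) (us : ∀ p : ℕ, Fin p → ℝ)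
    (hpos : ∀ p, (Covs p).PosDef)
    (M c K : ℝ) (hM : 0 < M) (hc : 0 < c) (hK : 1 ≤ K)
    (hbd : ∀ p i, |us p i| ≤ M)
    (hnorm : ∀ p : ℕ, c * p ≤ ∑ i, us p i ^ 2)
    (hcond : ∀ p : ℕ,
      (⨆ i, ((hpos p).1.inv.eigenvalues) i) / (⨅ i, ((hpos p).1.inv.eigenvalues) i) ≤ K)
    (ε : ℝ) (hε : 0 < ε) (hε' : ε < 1 / 2) :
    Filter.Tendsto
      (fun p => thinningMeasure p 2⁻¹
        {ω | (1 / 2 - ε) / K ≤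
          subSeparation (Covs p) (us p) (Finset.univ.filter fun i => ω i = true)
            / separation (Covs p) (us p)})
      Filter.atTop (nhds 1) :=
  thinning_preserves_ratio_of_separation_general Covs us hpos M c K hc hbd hnorm hcond ε hε hε'
end
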